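/- arXiv:2105.12233 — 4 statements merged into one kernel-verified Lean document; each statement's English description precedes it below -/
import Mathlib

section
/- For the map λ^(t) : ℂ³ → ℂ³ ⊗ ℂ³ defined on the standard basis by λ^(t)(α_j) = α¹_j + (1-t)β¹_j + (1-t)β¹_{j+1} + (2t-1)β¹_{j-1} with t ∈ [1/2, 1), if a = (a_1, a_2, a_3) with a_i in a C*-algebra M, and b_1 = (1-t)a_2 + (1-t)a_3 + (2t-1)a_1, b_2 = (1-t)a_1 + (1-t)a_3 + (2t-1)a_2, b_3 = (1-t)a_1 + (1-t)a_2 + (2t-1)a_3, then max over adjacent pairs of the differences, namely max(‖a_i - b_j‖, ‖b_i - b_j‖ over the six edges of the subdivided triangle), is at most t · max_{i≠j} ‖a_i - a_j‖. -/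
private lemma key {M : Type*} [NormedAddCommGroup M] [NormedSpace ℝ M]
    (x y : M) (c d o : ℝ) (hc : 0 ≤ c) (hd : 0 ≤ d)
    (hx : ‖x‖ ≤ o) (hy : ‖y‖ ≤ o) : ‖c • x + d • y‖ ≤ (c + d) * o := by
  calc ‖c • x + d • y‖ ≤ ‖c • x‖ + ‖d • y‖ := norm_add_le _ _
    _ = c * ‖x‖ + d * ‖y‖ := by rw [norm_smul, norm_smul, Real.norm_of_nonneg hc,
        Real.norm_of_nonneg hd]
    _ ≤ c * o + d * o := by
        gcongr
    _ = (c + d) * o := by ring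

/-- For the symmetric extension `λ^(t)` with `t ∈ [1/2,1)`, all differences along the six
edges of the subdivided triangle (vertex–midpoint pairs and midpoint–midpoint pairs) are
bounded in norm by `t · osc(a)`, where `osc(a) = max_{i≠j} ‖a_i - a_j‖`. -/
theorem stmt3 (M : Type*) [NormedAddCommGroup M] [NormedSpace ℝ M]
    (t : ℝ) (ht : t ∈ Set.Ico (1/2 : ℝ) 1) (a₁ a₂ a₃ b₁ b₂ b₃ : M)
    (hb₁ : b₁ = (1 - t) • a₂ + (1 - t) • a₃ + (2*t - 1) • a₁)
    (hb₂ : b₂ = (1 - t) • a₁ + (1 - t) • a₃ + (2*t - 1) • a₂)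
    (hb₃ : b₃ = (1 - t) • a₁ + (1 - t) • a₂ + (2*t - 1) • a₃)
    (osc : ℝ) (hosc : osc = max (max ‖a₁ - a₂‖ ‖a₁ - a₃‖) ‖a₂ - a₃‖) :
    ‖a₁ - b₃‖ ≤ t * osc ∧ ‖a₁ - b₂‖ ≤ t * osc ∧
    ‖a₂ - b₃‖ ≤ t * osc ∧ ‖a₂ - b₁‖ ≤ t * osc ∧
    ‖a₃ - b₁‖ ≤ t * osc ∧ ‖a₃ - b₂‖ ≤ t * osc ∧
    ‖b₁ - b₂‖ ≤ t * osc ∧ ‖b₂ - b₃‖ ≤ t * osc ∧ ‖b₁ - b₃‖ ≤ t * osc := by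
  obtain ⟨ht1, ht2⟩ := ht
  have hc : (0:ℝ) ≤ 1 - t := by linarith
  have hd : (0:ℝ) ≤ 2*t - 1 := by linarith
  have h12 : ‖a₁ - a₂‖ ≤ osc := by rw [hosc]; exact le_max_of_le_left (le_max_left _ _)
  have h13 : ‖a₁ - a₃‖ ≤ osc := by rw [hosc]; exact le_max_of_le_left (le_max_right _ _)
  have h23 : ‖a₂ - a₃‖ ≤ osc := by rw [hosc]; exact le_max_right _ _
  have h21 : ‖a₂ - a₁‖ ≤ osc := by rwa [norm_sub_rev]
  have h31 : ‖a₃ - a₁‖ ≤ osc := by rwa [norm_sub_rev]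
  have h32 : ‖a₃ - a₂‖ ≤ osc := by rwa [norm_sub_rev]
  have hteq : (1 - t) + (2*t - 1) = t := by ring
  have hosc0 : 0 ≤ osc := le_trans (norm_nonneg _) h12
  have hmm : ∀ x : M, ‖x‖ ≤ osc → ‖(3*t - 2) • x‖ ≤ t * osc := by
    intro x hx
    rw [norm_smul]
    have : ‖(3*t - 2 : ℝ)‖ ≤ t := by
      rw [Real.norm_eq_abs, abs_le]; constructor <;> linarith
    exact mul_le_mul this hx (norm_nonneg _) (by linarith)
  refine ⟨?_, ?_, ?_, ?_, ?_, ?_, ?_, ?_, ?_⟩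
  · have e : a₁ - b₃ = (1 - t) • (a₁ - a₂) + (2*t - 1) • (a₁ - a₃) := by
      rw [hb₃]; module
    rw [e]; exact (key _ _ _ _ _ hc hd h12 h13).trans_eq (by rw [hteq])
  · have e : a₁ - b₂ = (1 - t) • (a₁ - a₃) + (2*t - 1) • (a₁ - a₂) := by
      rw [hb₂]; module
    rw [e]; exact (key _ _ _ _ _ hc hd h13 h12).trans_eq (by rw [hteq])
  · have e : a₂ - b₃ = (1 - t) • (a₂ - a₁) + (2*t - 1) • (a₂ - a₃) := by
      rw [hb₃]; module
    rw [e]; exact (key _ _ _ _ _ hc hd h21 h23).trans_eq (by rw [hteq])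
  · have e : a₂ - b₁ = (1 - t) • (a₂ - a₃) + (2*t - 1) • (a₂ - a₁) := by
      rw [hb₁]; module
    rw [e]; exact (key _ _ _ _ _ hc hd h23 h21).trans_eq (by rw [hteq])
  · have e : a₃ - b₁ = (1 - t) • (a₃ - a₂) + (2*t - 1) • (a₃ - a₁) := by
      rw [hb₁]; module
    rw [e]; exact (key _ _ _ _ _ hc hd h32 h31).trans_eq (by rw [hteq])
  · have e : a₃ - b₂ = (1 - t) • (a₃ - a₁) + (2*t - 1) • (a₃ - a₂) := by
      rw [hb₂]; module
    rw [e]; exact (key _ _ _ _ _ hc hd h31 h32).trans_eq (by rw [hteq])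
  · have e : b₁ - b₂ = (3*t - 2) • (a₁ - a₂) := by rw [hb₁, hb₂]; module
    rw [e]; exact hmm _ h12
  · have e : b₂ - b₃ = (3*t - 2) • (a₂ - a₃) := by rw [hb₂, hb₃]; module
    rw [e]; exact hmm _ h23
  · have e : b₁ - b₃ = (3*t - 2) • (a₁ - a₃) := by rw [hb₁, hb₃]; module
    rw [e]; exact hmm _ h13
end

section
/- With a_1, a_2, a_3 in a normed space, t ∈ [1/2,1), and b_1 = (1-t)a_2 + (1-t)a_3 + (2t-1)a_1, b_2 = (1-t)a_1 + (1-t)a_3 + (2t-1)a_2, b_3 = (1-t)a_1 + (1-t)a_2 + (2t-1)a_3, one has max(‖a_1 - b_2‖, ‖a_1 - b_3‖, ‖a_2 - b_1‖, ‖a_2 - b_3‖, ‖a_3 - b_1‖, ‖a_3 - b_2‖) ≤ t · max_{i≠j}‖a_i - a_j‖. -/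
lemma aux4 {M : Type*} [NormedAddCommGroup M] [NormedSpace ℝ M]
    {t m : ℝ} (h1 : 1/2 ≤ t) (h2 : t < 1) {x y : M}
    (hx : ‖x‖ ≤ m) (hy : ‖y‖ ≤ m) :
    ‖(1 - t) • x + (2*t - 1) • y‖ ≤ t * m := by
  calc ‖(1 - t) • x + (2*t - 1) • y‖ ≤ ‖(1 - t) • x‖ + ‖(2*t - 1) • y‖ :=
        norm_add_le _ _
    _ = (1 - t) * ‖x‖ + (2*t - 1) * ‖y‖ := by
        rw [norm_smul, norm_smul, Real.norm_eq_abs, Real.norm_eq_abs,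
          abs_of_nonneg (by linarith), abs_of_nonneg (by linarith)]
    _ ≤ (1 - t) * m + (2*t - 1) * m := by
        have hm : (0:ℝ) ≤ m := le_trans (norm_nonneg x) hx
        gcongr <;> linarith
    _ = t * m := by ring

/-- The symmetric extension satisfies `‖a - λ^(t)(a)‖ ≤ t · osc(a)`: each of the six
vertex–midpoint differences is bounded in norm by `t · max_{i≠j} ‖a_i - a_j‖`. -/
theorem stmt4 (M : Type*) [NormedAddCommGroup M] [NormedSpace ℝ M]
    (t : ℝ) (ht : t ∈ Set.Ico (1/2 : ℝ) 1) (a₁ a₂ a₃ b₁ b₂ b₃ : M)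
    (hb₁ : b₁ = (1 - t) • a₂ + (1 - t) • a₃ + (2*t - 1) • a₁)
    (hb₂ : b₂ = (1 - t) • a₁ + (1 - t) • a₃ + (2*t - 1) • a₂)
    (hb₃ : b₃ = (1 - t) • a₁ + (1 - t) • a₂ + (2*t - 1) • a₃) :
    max (max (max ‖a₁ - b₂‖ ‖a₁ - b₃‖) (max ‖a₂ - b₁‖ ‖a₂ - b₃‖))
        (max ‖a₃ - b₁‖ ‖a₃ - b₂‖)
      ≤ t * max (max ‖a₁ - a₂‖ ‖a₁ - a₃‖) ‖a₂ - a₃‖ := by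
  obtain ⟨h1, h2⟩ := ht
  set m := max (max ‖a₁ - a₂‖ ‖a₁ - a₃‖) ‖a₂ - a₃‖ with hm
  have h12 : ‖a₁ - a₂‖ ≤ m := le_max_of_le_left (le_max_left _ _)
  have h13 : ‖a₁ - a₃‖ ≤ m := le_max_of_le_left (le_max_right _ _)
  have h23 : ‖a₂ - a₃‖ ≤ m := le_max_right _ _
  have h21 : ‖a₂ - a₁‖ ≤ m := by rwa [norm_sub_rev]
  have h31 : ‖a₃ - a₁‖ ≤ m := by rwa [norm_sub_rev]
  have h32 : ‖a₃ - a₂‖ ≤ m := by rwa [norm_sub_rev]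
  have e1 : a₁ - b₂ = (1 - t) • (a₁ - a₃) + (2*t - 1) • (a₁ - a₂) := by
    rw [hb₂]; module
  have e2 : a₁ - b₃ = (1 - t) • (a₁ - a₂) + (2*t - 1) • (a₁ - a₃) := by
    rw [hb₃]; module
  have e3 : a₂ - b₁ = (1 - t) • (a₂ - a₃) + (2*t - 1) • (a₂ - a₁) := by
    rw [hb₁]; module
  have e4 : a₂ - b₃ = (1 - t) • (a₂ - a₁) + (2*t - 1) • (a₂ - a₃) := by
    rw [hb₃]; module
  have e5 : a₃ - b₁ = (1 - t) • (a₃ - a₂) + (2*t - 1) • (a₃ - a₁) := by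
    rw [hb₁]; module
  have e6 : a₃ - b₂ = (1 - t) • (a₃ - a₁) + (2*t - 1) • (a₃ - a₂) := by
    rw [hb₂]; module
  simp only [max_le_iff]
  exact ⟨⟨⟨e1 ▸ aux4 h1 h2 h13 h12, e2 ▸ aux4 h1 h2 h12 h13⟩,
    ⟨e3 ▸ aux4 h1 h2 h23 h21, e4 ▸ aux4 h1 h2 h21 h23⟩⟩,
    ⟨e5 ▸ aux4 h1 h2 h32 h31, e6 ▸ aux4 h1 h2 h31 h32⟩⟩
end

section
/- For a ∈ M_3(ℂ)^{⊗n} ⊗ ℂ³ written as a = Σ_i a_i ⊗ e_{ii}, and the operator F on (ℂ³)^{⊗n} ⊗ E (E = off-diagonal 3×3 matrices with Hilbert–Schmidt inner product) acting by F(x ⊗ m) = x ⊗ m^T, the operator norm ‖a − F a F‖ equals osc(a) = max_{i≠j} ‖a_i − a_j‖; hence ‖[F, a]‖ = osc(a). -/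
open Matrix

/-- The index set of the six off-diagonal matrix units, i.e. the oriented edges. -/
abbrev OffDiag3 := {p : Fin 3 × Fin 3 // p.1 ≠ p.2}

/-!
In the basis `x ⊗ e_{ij}` of `H_n`, the operator `a` acts on the summand of `e_{ij}` by `a_i`,
so it is block diagonal over the six off-diagonal units, while `F` is the permutation matrix
exchanging the blocks of `e_{ij}` and `e_{ji}`. Hence `F a F` is block diagonal with blocks `a_j`,
and `a − F a F` with blocks `a_i − a_j`. Since `blockDiagonal` is an injective *-homomorphism of
C⋆-algebras, it is isometric, so the norm of a block-diagonal matrix is the largest block norm.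
Finally `F a − a F = F (a − F a F)` because `F² = 1`, and multiplying by the unitary `F`
preserves norms.
-/

open scoped Matrix.Norms.L2Operator

namespace Matrix

variable {n ι R : Type*} [Fintype n] [DecidableEq n] [Fintype ι] [DecidableEq ι]

variable (n ι) in
def blockDiagonalStarAlgHom : (ι → Matrix n n ℂ) →⋆ₐ[ℂ] Matrix (n × ι) (n × ι) ℂ where
  toRingHom := blockDiagonalRingHom n ι ℂ
  commutes' c := by
    simp [Algebra.algebraMap_eq_smul_one, blockDiagonal_smul, blockDiagonal_one]
  map_star' B := (blockDiagonal_conjTranspose B).symm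

lemma l2_opNorm_blockDiagonal (B : ι → Matrix n n ℂ) : ‖blockDiagonal B‖ = ⨆ i, ‖B i‖ := by
  have hB : ‖blockDiagonal B‖ = ‖B‖ :=
    NonUnitalStarAlgHom.norm_map (blockDiagonalStarAlgHom n ι) blockDiagonal_injective B
  rw [hB]
  refine le_antisymm ?_ (Real.iSup_le (norm_le_pi_norm B) (norm_nonneg _))
  refine (pi_norm_le_iff_of_nonneg (Real.iSup_nonneg fun i => norm_nonneg _)).2 fun i => ?_
  exact le_ciSup (f := fun i => ‖B i‖) (Set.finite_range _).bddAbove i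

lemma permMatrix_mem_unitary [Semiring R] [StarRing R] (σ : Equiv.Perm n) :
    σ.permMatrix R ∈ unitary (Matrix n n R) := by
  rw [Unitary.mem_iff, star_eq_conjTranspose, conjTranspose_permMatrix, ← permMatrix_mul,
    ← permMatrix_mul, inv_mul_cancel, mul_inv_cancel, permMatrix_one]
  exact ⟨rfl, rfl⟩

lemma permMatrix_prodCongr_mul_blockDiagonal_mul [Semiring R] (τ : Equiv.Perm ι)
    (B : ι → Matrix n n R) :
    Equiv.Perm.permMatrix R ((Equiv.refl n).prodCongr τ) * blockDiagonal B *
      Equiv.Perm.permMatrix R ((Equiv.refl n).prodCongr τ)⁻¹ = blockDiagonal (B ∘ τ) := by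
  rw [PEquiv.toMatrix_toPEquiv_mul, PEquiv.mul_toMatrix_toPEquiv]
  ext ⟨p, i⟩ ⟨q, j⟩
  simp [blockDiagonal_apply, Equiv.Perm.inv_def, τ.injective.eq_iff]

end Matrix

@[simps apply]
def OffDiag3.transpose : Equiv.Perm OffDiag3 where
  toFun e := ⟨e.1.swap, e.2.symm⟩
  invFun e := ⟨e.1.swap, e.2.symm⟩

/-- For `a = Σ_i a_i ⊗ e_{ii}` acting on `H_n = (ℂ³)^{⊗n} ⊗ E` (with `E` the span of the
off-diagonal matrix units) and `F` the transpose operator `x ⊗ m ↦ x ⊗ mᵀ`, one has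
`‖a − F a F‖ = osc(a) = max_{i≠j} ‖a_i − a_j‖`, and hence `‖[F,a]‖ = osc(a)`.
Here everything is modelled by explicit matrices indexed by `Fin m × OffDiag3`
(`m = 3^n`). -/
theorem stmt16 (m : ℕ) (aM : Fin 3 → Matrix (Fin m) (Fin m) ℂ)
    (A F : Matrix (Fin m × OffDiag3) (Fin m × OffDiag3) ℂ)
    (hA : ∀ p q : Fin m, ∀ e e' : OffDiag3,
      A (p, e) (q, e') = if e = e' then aM e.val.1 p q else 0)
    (hF : ∀ p q : Fin m, ∀ e e' : OffDiag3,
      F (p, e) (q, e') = if p = q ∧ e.val = (e'.val.2, e'.val.1) then 1 else 0)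
    (osc : ℝ)
    (hosc : osc = ⨆ e : OffDiag3, ‖toEuclideanCLM (𝕜 := ℂ) (aM e.val.1 - aM e.val.2)‖) :
    ‖toEuclideanCLM (𝕜 := ℂ) (A - F * A * F)‖ = osc ∧
    ‖toEuclideanCLM (𝕜 := ℂ) (F * A - A * F)‖ = osc := by
  set σ : Equiv.Perm (Fin m × OffDiag3) := (Equiv.refl _).prodCongr OffDiag3.transpose
  have hσ : σ⁻¹ = σ := rfl
  have hFσ : F = σ.permMatrix ℂ := by
    ext ⟨p, e⟩ ⟨q, e'⟩
    rw [hF, Equiv.Perm.permMatrix, PEquiv.toMatrix_toPEquiv_apply, Pi.single_apply]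
    simp only [σ, Equiv.prodCongr_apply, Prod.map, Equiv.refl_apply, OffDiag3.transpose_apply,
      Prod.ext_iff, Subtype.ext_iff, Prod.fst_swap, Prod.snd_swap]
    grind
  have hAB : A = blockDiagonal fun e => aM e.1.1 := by
    ext ⟨p, e⟩ ⟨q, e'⟩
    rw [hA, blockDiagonal_apply]
  have hFF : F * F = 1 := by
    rw [hFσ, ← permMatrix_mul, mul_eq_one_iff_eq_inv.2 hσ.symm, permMatrix_one]
  have hdiff : A - F * A * F = blockDiagonal fun e => aM e.1.1 - aM e.1.2 := by
    conv_lhs => rw [hAB, hFσ]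
    nth_rw 2 [← hσ]
    rw [permMatrix_prodCongr_mul_blockDiagonal_mul, ← blockDiagonal_sub]
    rfl
  have hnorm : ‖A - F * A * F‖ = osc := by
    rw [hdiff, l2_opNorm_blockDiagonal, hosc]
    rfl
  have hcomm : F * A - A * F = F * (A - F * A * F) := by
    rw [mul_sub, ← mul_assoc, ← mul_assoc, hFF, one_mul]
  refine ⟨hnorm, ?_⟩
  rw [← cstar_norm_def, hcomm, CStarRing.norm_mem_unitary_mul _ (hFσ ▸ permMatrix_mem_unitary σ),
    hnorm]
end

section
/- For a = Σ_{i=1}^3 a_i ⊗ e_{ii} ∈ M_3(ℂ)^{⊗n} ⊗ ℂ³ acting on H_n = (ℂ³)^{⊗n} ⊗ E with D_n = 2ⁿF (F the transpose on E), the Hilbert–Schmidt norm of the commutator satisfies Tr(|[D_n, a]|²) = 2^{2n} Σ_{j≠k} Tr(|a_j − a_k|²). -/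
open Matrix

def osw (e : OffDiag3) : OffDiag3 := ⟨(e.val.2, e.val.1), e.prop.symm⟩

lemma osw_invol : Function.Involutive osw := fun e => by cases e; rfl

lemma osw_cond (e f : OffDiag3) : (e.val = (f.val.2, f.val.1)) ↔ f = osw e := by
  constructor
  · intro h
    apply Subtype.ext
    have h1 : e.val.1 = f.val.2 := by rw [h]
    have h2 : e.val.2 = f.val.1 := by rw [h]
    exact Prod.ext_iff.mpr ⟨h2.symm, h1.symm⟩
  · rintro rfl; rfl

/-- For `a = Σ_i a_i ⊗ e_{ii}` acting on `H_n = (ℂ³)^{⊗n} ⊗ E` and `D_n = 2ⁿ F`, the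
Hilbert–Schmidt identity `Tr(|[D_n,a]|²) = 2^{2n} Σ_{j≠k} Tr(|a_j − a_k|²)` holds.
Everything is modelled by explicit matrices indexed by `Fin m × OffDiag3` (`m = 3^n`). -/
theorem stmt17 (n m : ℕ) (aM : Fin 3 → Matrix (Fin m) (Fin m) ℂ)
    (A F : Matrix (Fin m × OffDiag3) (Fin m × OffDiag3) ℂ)
    (hA : ∀ p q : Fin m, ∀ e e' : OffDiag3,
      A (p, e) (q, e') = if e = e' then aM e.val.1 p q else 0)
    (hF : ∀ p q : Fin m, ∀ e e' : OffDiag3,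
      F (p, e) (q, e') = if p = q ∧ e.val = (e'.val.2, e'.val.1) then 1 else 0)
    (C : Matrix (Fin m × OffDiag3) (Fin m × OffDiag3) ℂ)
    (hC : C = ((2 : ℂ) ^ n) • (F * A - A * F)) :
    Matrix.trace (Cᴴ * C) =
      (2 : ℂ) ^ (2 * n) *
        ∑ j : Fin 3, ∑ k : Fin 3,
          if j ≠ k then Matrix.trace ((aM j - aM k)ᴴ * (aM j - aM k)) else 0 := by
  -- entrywise formula for C
  have hC' : ∀ p q : Fin m, ∀ e e' : OffDiag3,
      C (p, e) (q, e') = (2:ℂ)^n *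
        (if e' = osw e then (aM e.val.2 - aM e.val.1) p q else 0) := by
    intro p q e e'
    subst hC
    simp only [Matrix.smul_apply, Matrix.sub_apply, Matrix.mul_apply, smul_eq_mul,
      Fintype.sum_prod_type, hA, hF]
    congr 1
    simp only [osw_cond, ite_and, ite_mul, mul_ite, one_mul, mul_one, zero_mul, mul_zero]
    rw [Finset.sum_comm]
    simp [Finset.sum_ite_eq, Finset.sum_ite_eq']
    have hsum : (∑ x : OffDiag3, if e' = osw x then if e = x then aM e.val.1 p q else 0 else 0)
        = if e' = osw e then aM e.val.1 p q else 0 := by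
      rw [Finset.sum_eq_single e (fun b _ hb => by simp [Ne.symm hb]) (by simp)]
      simp
    rw [hsum]
    split_ifs with h
    · subst h; show aM (osw e).val.1 p q - aM e.val.1 p q = _; rfl
    · ring
  set d : OffDiag3 → Matrix (Fin m) (Fin m) ℂ := fun e => aM e.val.2 - aM e.val.1 with hd
  have hterm : ∀ (p q : Fin m) (e e' : OffDiag3),
      star (C (p, e) (q, e')) * C (p, e) (q, e') =
        (2:ℂ)^(2*n) * (if e' = osw e then star (d e p q) * d e p q else 0) := by
    intro p q e e'
    rw [hC']
    split_ifs with h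
    · simp only [star_mul']
      have : star ((2:ℂ)^n) = (2:ℂ)^n := by
        rw [star_pow]; norm_num
      rw [this, two_mul, pow_add]; ring
    · simp
  have key : Matrix.trace (Cᴴ * C)
      = (2:ℂ)^(2*n) * ∑ e : OffDiag3, Matrix.trace ((d e)ᴴ * (d e)) := by
    simp only [Matrix.trace, Matrix.diag, Matrix.mul_apply, Matrix.conjTranspose_apply,
      Fintype.sum_prod_type]
    simp only [hterm, ← Finset.mul_sum]
    congr 1
    -- goal: Σ_q Σ_{e'} Σ_p Σ_e ite = Σ_e Σ_q Σ_p star (d e p q) * d e p q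
    have inner : ∀ q : Fin m, ∀ e' : OffDiag3,
        (∑ p : Fin m, ∑ e : OffDiag3, if e' = osw e then star (d e p q) * d e p q else 0)
        = ∑ e : OffDiag3, if e' = osw e then (∑ p : Fin m, star (d e p q) * d e p q) else 0 := by
      intro q e'
      rw [Finset.sum_comm]
      refine Finset.sum_congr rfl fun e _ => ?_
      split_ifs <;> simp
    simp only [inner]
    have collapse : ∀ q : Fin m,
        (∑ e' : OffDiag3, ∑ e : OffDiag3,
          if e' = osw e then (∑ p : Fin m, star (d e p q) * d e p q) else 0)
        = ∑ e : OffDiag3, ∑ p : Fin m, star (d e p q) * d e p q := by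
      intro q
      rw [Finset.sum_comm]
      exact Finset.sum_congr rfl fun e _ => by simp
    simp only [collapse]
    rw [Finset.sum_comm]
  rw [key]
  congr 1
  have h1 : ∑ e : OffDiag3, Matrix.trace ((d e)ᴴ * (d e))
      = ∑ e : OffDiag3,
          Matrix.trace ((aM e.val.1 - aM e.val.2)ᴴ * (aM e.val.1 - aM e.val.2)) := by
    refine Fintype.sum_equiv (Function.Involutive.toPerm osw osw_invol) _ _ fun e => rfl
  rw [h1]
  have h2 : ∑ e : OffDiag3,
        Matrix.trace ((aM e.val.1 - aM e.val.2)ᴴ * (aM e.val.1 - aM e.val.2))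
      = ∑ x ∈ Finset.univ.filter (fun p : Fin 3 × Fin 3 => p.1 ≠ p.2),
          Matrix.trace ((aM x.1 - aM x.2)ᴴ * (aM x.1 - aM x.2)) := by
    exact (Finset.sum_subtype (p := fun p : Fin 3 × Fin 3 => p.1 ≠ p.2) _ (by simp)
      (fun x : Fin 3 × Fin 3 =>
        Matrix.trace ((aM x.1 - aM x.2)ᴴ * (aM x.1 - aM x.2)))).symm
  rw [h2, Finset.sum_filter, Fintype.sum_prod_type]
end
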